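/- Fix β ∈ (0,1) and let p = p(N) ∈ (0,1] be a sequence with p(N)³N² → ∞ as N → ∞. Then the expected partition function satisfies E[Z_N(β)] ~ e^{(1-p)β²/(8p)} · 2^N / √(1-β) as N → ∞, where a_N ~ b_N means a_N/b_N → 1. -/

import Mathlib

open MeasureTheory ProbabilityTheory Filter
open scoped Classical

noncomputable section

/-- The spin value `±1` associated to a Boolean. -/
def spin (b : Bool) : ℝ := if b then 1 else -1

/-- The total magnetization `|σ| = σ₁ + ⋯ + σ_N` of a spin configuration. -/
def mag {N : ℕ} (σ : Fin N → Bool) : ℝ := ∑ i, spin (σ i)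

/-- The overlap `|στ| = ∑ σᵢτᵢ` of two spin configurations. -/
def magPair {N : ℕ} (σ τ : Fin N → Bool) : ℝ := ∑ i, spin (σ i) * spin (τ i)

/-- The Hamiltonian `H(σ) = -(1/(2Np)) ∑_{i,j} ε_{i,j} σᵢ σⱼ` of the Ising model on the
directed Erdős–Rényi graph with edge indicators `ε`. -/
def hamil (N : ℕ) (p : ℝ) (ε : Fin N × Fin N → Bool) (σ : Fin N → Bool) : ℝ :=
  -(1 / (2 * N * p)) * ∑ i : Fin N, ∑ j : Fin N,
    (if ε (i, j) then (1 : ℝ) else 0) * spin (σ i) * spin (σ j)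

/-- The joint law of the i.i.d. Bernoulli(p) edge indicators `(ε_{i,j})_{i,j=1}^N`. -/
def bern (N : ℕ) (p : ℝ) : Measure (Fin N × Fin N → Bool) :=
  Measure.pi fun _ => (PMF.bernoulli (min 1 (Real.toNNReal p)) (min_le_left _ _)).toMeasure

/-- The generalized partition function `Z_N(β, g) = ∑_σ e^{-βH(σ)} g(|σ|/√N)`. -/
def ZNg (N : ℕ) (p β : ℝ) (g : ℝ → ℝ) (ε : Fin N × Fin N → Bool) : ℝ :=
  ∑ σ : Fin N → Bool, Real.exp (-β * hamil N p ε σ) * g (mag σ / Real.sqrt N)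

/-- The expectation `𝔼 Z_N(β, g)` over the randomness of the graph. -/
def EZNg (N : ℕ) (p β : ℝ) (g : ℝ → ℝ) : ℝ :=
  ∫ ε, ZNg N p β g ε ∂(bern N p)

/-- The Gaussian expectation `𝔼_ξ [g(ξ) e^{β ξ²/2}]` for a standard normal `ξ`. -/
def gaussExp (β : ℝ) (g : ℝ → ℝ) : ℝ :=
  ∫ x, g x * Real.exp (β * x ^ 2 / 2) ∂(gaussianReal 0 1)

/-!
Averaging over the graph factorizes over the `N²` edges: with `c = β/(2Np)`, each edge contributes
`1 - p + p e^{c σᵢσⱼ} = exp (F/2 + G σᵢσⱼ/2)`, where `F` and `G` are the sum and the difference of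
the Bernoulli cumulant generating function at `±c`. Hence `𝔼 Z_N = e^{N²F/2} ∑_σ e^{G|σ|²/2}`, and
linearizing `|σ|²` with a Gaussian variable turns the sum into
`2^N (2π)^{-1/2} ∫ e^{-y²/2} cosh (√G y)^N dy`. Taylor expansion gives
`N²F/2 = (1-p)β²/(8p) + O(1/(p³N²))` and `NG → β`, and since `β < 1` dominated convergence sends the
integral to `√(2π/(1-β))`.
-/

open Real Topology

namespace Real

lemma abs_log_one_add_sub_self_le {t : ℝ} (ht : -(1 / 2) ≤ t) :
    |log (1 + t) - t| ≤ 2 * t ^ 2 := by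
  have h1t : 0 < 1 + t := by linarith
  have hupper : log (1 + t) ≤ t := by linarith [log_le_sub_one_of_pos h1t]
  have hlower : t / (1 + t) ≤ log (1 + t) := by
    have := one_sub_inv_le_log_of_pos h1t
    rwa [show 1 - (1 + t)⁻¹ = t / (1 + t) by field_simp; ring] at this
  have : t - 2 * t ^ 2 ≤ t / (1 + t) := by
    rw [le_div_iff₀ h1t]; nlinarith [sq_nonneg t]
  rw [abs_le]; constructor <;> nlinarith [sq_nonneg t]

lemma one_add_sq_div_two_le_cosh (x : ℝ) : 1 + x ^ 2 / 2 ≤ cosh x := by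
  have hterms : ∀ n, 0 ≤ x ^ (2 * n) / ((2 * n).factorial : ℝ) := fun n => by
    rw [pow_mul]; positivity
  have := sum_le_hasSum (Finset.range 2) (fun n _ => hterms n) (hasSum_cosh x)
  simpa [Finset.sum_range_succ] using this

lemma cosh_le_one_add_sq_div_two_add {x : ℝ} (hx : |x| ≤ 1) :
    cosh x ≤ 1 + x ^ 2 / 2 + 3 / 8 * x ^ 4 := by
  have hx2 : x ^ 2 / 2 ≤ 1 := by nlinarith [sq_abs x, abs_nonneg x]
  have hexp := exp_bound' (x := x ^ 2 / 2) (by positivity) hx2 (n := 2) (by norm_num)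
  norm_num [Finset.sum_range_succ] at hexp
  nlinarith [cosh_le_exp_half_sq x]

lemma abs_log_cosh_sub_sq_div_two_le (x : ℝ) : |log (cosh x) - x ^ 2 / 2| ≤ x ^ 4 / 2 := by
  have hupper : log (cosh x) ≤ x ^ 2 / 2 := by
    simpa using log_le_log (cosh_pos x) (cosh_le_exp_half_sq x)
  have hlower : log (1 + x ^ 2 / 2) ≤ log (cosh x) :=
    log_le_log (by positivity) (one_add_sq_div_two_le_cosh x)
  have := abs_log_one_add_sub_self_le (t := x ^ 2 / 2) (by nlinarith [sq_nonneg x])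
  rw [abs_le] at this ⊢
  constructor <;> nlinarith [sq_nonneg x]

end Real

lemma exp_neg_sq_div_two_add_mul (r y : ℝ) :
    exp (-(y ^ 2 / 2) + r * y) = exp (r ^ 2 / 2) * exp (-(1 / 2) * (y - r) ^ 2) := by
  rw [← exp_add]; ring_nf

lemma integrable_exp_neg_sq_div_two_add_mul (r : ℝ) :
    Integrable fun y : ℝ => exp (-(y ^ 2 / 2) + r * y) := by
  simp_rw [exp_neg_sq_div_two_add_mul]
  exact ((integrable_exp_neg_mul_sq (by norm_num : (0 : ℝ) < 1 / 2)).comp_sub_right r).const_mul _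

lemma integral_exp_neg_sq_div_two_add_mul (r : ℝ) :
    ∫ y : ℝ, exp (-(y ^ 2 / 2) + r * y) = √(2 * π) * exp (r ^ 2 / 2) := by
  simp_rw [exp_neg_sq_div_two_add_mul]
  rw [integral_const_mul, integral_sub_right_eq_self (fun y => exp (-(1 / 2) * y ^ 2)) r,
    integral_gaussian, mul_comm]
  norm_num [div_div_eq_mul_div, mul_comm]

lemma sum_exp_mul_mag (N : ℕ) (r : ℝ) :
    ∑ σ : Fin N → Bool, exp (r * mag σ) = (2 * cosh r) ^ N := by
  have hsum : 2 * cosh r = ∑ b : Bool, exp (r * spin b) := by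
    simp only [Fintype.sum_bool, spin, ↓reduceIte, Bool.false_eq_true, mul_one, mul_neg, cosh_eq]
    ring
  simp_rw [hsum, Fintype.sum_pow, mag, Finset.mul_sum, exp_sum]

/-- Hubbard–Stratonovich: `e^{a m²/2}` is the Gaussian moment generating function at `√a m`. -/
lemma sum_exp_mul_mag_sq (N : ℕ) {a : ℝ} (ha : 0 ≤ a) :
    ∑ σ : Fin N → Bool, exp (a * mag σ ^ 2 / 2)
      = 2 ^ N / √(2 * π) * ∫ y : ℝ, exp (-(y ^ 2 / 2)) * cosh (√a * y) ^ N := by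
  have hsqrt : √(2 * π) ≠ 0 := by positivity
  have hmgf (σ : Fin N → Bool) : exp (a * mag σ ^ 2 / 2)
      = (√(2 * π))⁻¹ * ∫ y : ℝ, exp (-(y ^ 2 / 2) + (√a * mag σ) * y) := by
    rw [integral_exp_neg_sq_div_two_add_mul, inv_mul_cancel_left₀ hsqrt, mul_pow, sq_sqrt ha]
  simp_rw [hmgf, ← Finset.mul_sum]
  rw [← integral_finsetSum _ fun σ _ => integrable_exp_neg_sq_div_two_add_mul _,
    div_eq_mul_inv, mul_comm ((2 : ℝ) ^ N), mul_assoc]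
  congr 1
  rw [← integral_const_mul]
  congr 1 with y
  simp_rw [exp_add, ← Finset.mul_sum, mul_right_comm _ (mag _), sum_exp_mul_mag]
  ring

instance isProbabilityMeasure_bern (N : ℕ) (p : ℝ) : IsProbabilityMeasure (bern N p) := by
  unfold bern; infer_instance

lemma integral_prod_bern (N : ℕ) {p : ℝ} (hp0 : 0 ≤ p) (hp1 : p ≤ 1)
    (f : Fin N × Fin N → Bool → ℝ) :
    ∫ ε, ∏ k, f k (ε k) ∂bern N p = ∏ k, (p * f k true + (1 - p) * f k false) := by
  have hmin : min 1 p.toNNReal = p.toNNReal := min_eq_right (Real.toNNReal_le_one.2 hp1)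
  rw [bern, integral_fintype_prod_eq_prod]
  refine Finset.prod_congr rfl fun k _ => ?_
  rw [PMF.integral_eq_sum, Fintype.sum_bool]
  simp only [PMF.bernoulli_apply, hmin, cond_false, cond_true, ENNReal.coe_toReal,
    NNReal.coe_sub (Real.toNNReal_le_one.2 hp1), Real.coe_toNNReal _ hp0, NNReal.coe_one,
    smul_eq_mul]

lemma neg_mul_hamil (N : ℕ) (p β : ℝ) (ε : Fin N × Fin N → Bool) (σ : Fin N → Bool) :
    -β * hamil N p ε σ = ∑ k : Fin N × Fin N,
      β / (2 * N * p) * ((if ε k then 1 else 0) * (spin (σ k.1) * spin (σ k.2))) := by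
  simp_rw [hamil, Fintype.sum_prod_type, ← Finset.mul_sum, mul_assoc]
  ring

lemma EZNg_one_eq_sum_prod (N : ℕ) {p : ℝ} (hp0 : 0 ≤ p) (hp1 : p ≤ 1) (β : ℝ) :
    EZNg N p β (fun _ => 1) = ∑ σ : Fin N → Bool, ∏ k : Fin N × Fin N,
      (1 - p + p * exp (β / (2 * N * p) * (spin (σ k.1) * spin (σ k.2)))) := by
  simp_rw [EZNg, ZNg, mul_one, neg_mul_hamil, exp_sum]
  rw [integral_finsetSum _ fun σ _ => Integrable.of_finite]
  refine Finset.sum_congr rfl fun σ _ => ?_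
  rw [integral_prod_bern N hp0 hp1 fun k b =>
    exp (β / (2 * N * p) * ((if b then 1 else 0) * (spin (σ k.1) * spin (σ k.2))))]
  simp [add_comm]

def bernCgf (p c : ℝ) : ℝ := log (1 - p + p * exp c)

def cgfEven (p c : ℝ) : ℝ := bernCgf p c + bernCgf p (-c)

def cgfOdd (p c : ℝ) : ℝ := bernCgf p c - bernCgf p (-c)

section BernCgf

variable {p : ℝ}

lemma one_sub_add_mul_exp_pos (hp0 : 0 ≤ p) (hp1 : p ≤ 1) (c : ℝ) : 0 < 1 - p + p * exp c := by
  rcases hp1.lt_or_eq with hp1 | rfl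
  · have := mul_nonneg hp0 (exp_pos c).le; linarith
  · simpa using exp_pos c

lemma exp_bernCgf (hp0 : 0 ≤ p) (hp1 : p ≤ 1) (c : ℝ) :
    exp (bernCgf p c) = 1 - p + p * exp c :=
  exp_log (one_sub_add_mul_exp_pos hp0 hp1 c)

lemma one_sub_add_mul_exp_mul_spin (hp0 : 0 ≤ p) (hp1 : p ≤ 1) (c : ℝ) (b b' : Bool) :
    1 - p + p * exp (c * (spin b * spin b'))
      = exp (cgfEven p c / 2 + cgfOdd p c / 2 * (spin b * spin b')) := by
  have hspin : spin b * spin b' = 1 ∨ spin b * spin b' = -1 := by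
    cases b <;> cases b' <;> norm_num [spin]
  rcases hspin with h | h <;> rw [h, ← exp_bernCgf hp0 hp1] <;> congr 1 <;>
    simp only [cgfEven, cgfOdd] <;> ring_nf

lemma sum_spin_mul_spin {N : ℕ} (σ : Fin N → Bool) :
    ∑ k : Fin N × Fin N, spin (σ k.1) * spin (σ k.2) = mag σ ^ 2 := by
  rw [Fintype.sum_prod_type, mag, sq, Finset.sum_mul_sum]

lemma prod_one_sub_add_mul_exp_mul_spin (hp0 : 0 ≤ p) (hp1 : p ≤ 1) (c : ℝ) {N : ℕ}
    (σ : Fin N → Bool) :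
    ∏ k : Fin N × Fin N, (1 - p + p * exp (c * (spin (σ k.1) * spin (σ k.2))))
      = exp (N ^ 2 * cgfEven p c / 2 + cgfOdd p c * mag σ ^ 2 / 2) := by
  simp_rw [one_sub_add_mul_exp_mul_spin hp0 hp1, ← exp_sum, Finset.sum_add_distrib,
    ← Finset.mul_sum, sum_spin_mul_spin, Finset.sum_const, Finset.card_univ, Fintype.card_prod,
    Fintype.card_fin, nsmul_eq_mul, Nat.cast_mul]
  ring_nf

lemma cgfOdd_nonneg (hp0 : 0 ≤ p) (hp1 : p ≤ 1) {c : ℝ} (hc : 0 ≤ c) : 0 ≤ cgfOdd p c := by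
  rw [cgfOdd, sub_nonneg, bernCgf, bernCgf]
  gcongr
  · exact one_sub_add_mul_exp_pos hp0 hp1 _
  · linarith

lemma cgfEven_eq (hp0 : 0 ≤ p) (hp1 : p ≤ 1) (c : ℝ) :
    cgfEven p c = log (1 + (p - p ^ 2) * (2 * cosh c - 2)) := by
  rw [cgfEven, bernCgf, bernCgf, ← log_mul (one_sub_add_mul_exp_pos hp0 hp1 c).ne'
    (one_sub_add_mul_exp_pos hp0 hp1 (-c)).ne', cosh_eq]
  congr 1
  have hinv : exp c * exp (-c) = 1 := by rw [← exp_add, add_neg_cancel, exp_zero]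
  linear_combination p ^ 2 * hinv

lemma abs_cgfEven_sub_le (hp0 : 0 ≤ p) (hp1 : p ≤ 1) {c : ℝ} (hc : |c| ≤ 1) :
    |cgfEven p c - (p - p ^ 2) * c ^ 2| ≤ 3 * p * c ^ 4 := by
  set q := p - p ^ 2
  set w := 2 * cosh c - 2
  have hq0 : 0 ≤ q := by nlinarith
  have hq : 4 * q ≤ 1 := by nlinarith [sq_nonneg (2 * p - 1)]
  have hc2 : c ^ 2 ≤ 1 := by nlinarith [sq_abs c, abs_nonneg c]
  have hw_lower : c ^ 2 ≤ w := by linarith [one_add_sq_div_two_le_cosh c]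
  have hw_upper : w - c ^ 2 ≤ 3 / 4 * c ^ 4 := by linarith [cosh_le_one_add_sq_div_two_add hc]
  have hc4 : c ^ 4 ≤ c ^ 2 := by nlinarith [sq_nonneg c]
  have hqw0 : 0 ≤ q * w := mul_nonneg hq0 (by nlinarith [sq_nonneg c])
  have hqw : q * w ≤ q * (2 * c ^ 2) := mul_le_mul_of_nonneg_left (by linarith) hq0
  have hlog := abs_log_one_add_sub_self_le (t := q * w) (by linarith)
  have hsq : 2 * (q * w) ^ 2 ≤ 2 * q * c ^ 4 := by
    have := pow_le_pow_left₀ hqw0 hqw 2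
    nlinarith [mul_nonneg hq0 (sq_nonneg (c ^ 2))]
  rw [cgfEven_eq hp0 hp1, abs_le]
  rw [abs_le] at hlog
  constructor <;> nlinarith [sq_nonneg c, mul_nonneg hq0 (sq_nonneg (c ^ 2))]

lemma abs_bernCgf_sub_le (hp0 : 0 ≤ p) (hp1 : p ≤ 1) {c : ℝ} (hc : |c| ≤ 1 / 2) :
    |bernCgf p c - p * c| ≤ 6 * p * c ^ 2 := by
  set u := p * (exp c - 1)
  have hexp := abs_exp_sub_one_sub_id_le (by linarith : |c| ≤ 1)
  have hu : |u - p * c| ≤ p * c ^ 2 := by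
    rw [show u - p * c = p * (exp c - 1 - c) by ring, abs_mul, abs_of_nonneg hp0]
    exact mul_le_mul_of_nonneg_left hexp hp0
  have hpc : |p * c| ≤ 1 / 2 := by
    rw [abs_mul, abs_of_nonneg hp0]; nlinarith [abs_nonneg c]
  have hu_lower : -(1 / 2) ≤ u := by
    have : p * c ≤ u := mul_le_mul_of_nonneg_left (by linarith [add_one_le_exp c]) hp0
    linarith [neg_abs_le (p * c)]
  have hlog := abs_log_one_add_sub_self_le hu_lower
  have hu_sq : 2 * u ^ 2 ≤ 5 * p * c ^ 2 := by
    have h1 : |u| ≤ 3 / 2 * p * |c| := by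
      calc |u| ≤ |p * c| + p * c ^ 2 := by
            linarith [abs_sub_abs_le_abs_sub u (p * c)]
        _ ≤ 3 / 2 * p * |c| := by
            have : |c| * |c| ≤ |c| * (1 / 2) := mul_le_mul_of_nonneg_left hc (abs_nonneg c)
            rw [abs_mul, abs_of_nonneg hp0, ← sq_abs c]
            nlinarith [mul_le_mul_of_nonneg_left this hp0]
    have h2 : u ^ 2 ≤ (3 / 2 * p * |c|) ^ 2 := by
      rw [← sq_abs u]; exact pow_le_pow_left₀ (abs_nonneg u) h1 2
    have hp2 : p ^ 2 * c ^ 2 ≤ p * c ^ 2 :=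
      mul_le_mul_of_nonneg_right (by nlinarith) (sq_nonneg c)
    rw [mul_pow, mul_pow, sq_abs] at h2
    nlinarith
  rw [bernCgf, show 1 - p + p * exp c = 1 + u by ring]
  calc |log (1 + u) - p * c| ≤ |log (1 + u) - u| + |u - p * c| := abs_sub_le _ _ _
    _ ≤ 6 * p * c ^ 2 := by nlinarith [mul_nonneg hp0 (sq_nonneg c)]

lemma abs_cgfOdd_sub_le (hp0 : 0 ≤ p) (hp1 : p ≤ 1) {c : ℝ} (hc : |c| ≤ 1 / 2) :
    |cgfOdd p c - 2 * p * c| ≤ 12 * p * c ^ 2 := by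
  have hpos := abs_bernCgf_sub_le hp0 hp1 hc
  have hneg := abs_bernCgf_sub_le hp0 hp1 (c := -c) (by rwa [abs_neg])
  rw [neg_sq] at hneg
  calc |cgfOdd p c - 2 * p * c|
      = |(bernCgf p c - p * c) - (bernCgf p (-c) - p * -c)| := by rw [cgfOdd]; ring_nf
    _ ≤ |bernCgf p c - p * c| + |bernCgf p (-c) - p * -c| := abs_sub _ _
    _ ≤ 12 * p * c ^ 2 := by linarith

end BernCgf

lemma EZNg_one_eq (N : ℕ) {p : ℝ} (hp0 : 0 ≤ p) (hp1 : p ≤ 1) {β : ℝ} (hβ : 0 ≤ β) :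
    EZNg N p β (fun _ => 1) = exp (N ^ 2 * cgfEven p (β / (2 * N * p)) / 2) * (2 ^ N / √(2 * π) *
      ∫ y : ℝ, exp (-(y ^ 2 / 2)) * cosh (√(cgfOdd p (β / (2 * N * p))) * y) ^ N) := by
  have hc : 0 ≤ β / (2 * N * p) := div_nonneg hβ (by positivity)
  simp_rw [EZNg_one_eq_sum_prod N hp0 hp1, prod_one_sub_add_mul_exp_mul_spin hp0 hp1, exp_add,
    ← Finset.mul_sum]
  rw [sum_exp_mul_mag_sq N (cgfOdd_nonneg hp0 hp1 hc)]

lemma tendsto_cosh_pow_of_tendsto_mul_sq {x : ℕ → ℝ} {L : ℝ}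
    (hx : Tendsto (fun N : ℕ => N * x N ^ 2) atTop (𝓝 L)) :
    Tendsto (fun N : ℕ => cosh (x N) ^ N) atTop (𝓝 (exp (L / 2))) := by
  have hlog : Tendsto (fun N : ℕ => N * log (cosh (x N)) - N * x N ^ 2 / 2) atTop (𝓝 0) := by
    refine squeeze_zero_norm (a := fun N : ℕ => (N * x N ^ 2) ^ 2 * (N : ℝ)⁻¹ / 2) (fun N => ?_) ?_
    · rcases N.eq_zero_or_pos with rfl | hN
      · simp
      · have hN' : (0 : ℝ) < N := Nat.cast_pos.2 hN
        rw [Real.norm_eq_abs, show (N * x N ^ 2) ^ 2 * (N : ℝ)⁻¹ / 2 = N * (x N ^ 4 / 2) by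
          field_simp, mul_div_assoc, ← mul_sub, abs_mul, Nat.abs_cast]
        exact mul_le_mul_of_nonneg_left (abs_log_cosh_sub_sq_div_two_le _) hN'.le
    · simpa using ((hx.pow 2).mul tendsto_inv_atTop_nhds_zero_nat).div_const 2
  have hlim := (hlog.add (hx.div_const 2)).rexp
  simp only [zero_add, sub_add_cancel, mul_div_assoc] at hlim
  refine hlim.congr fun N => ?_
  rw [exp_nat_mul, exp_log (cosh_pos _)]

lemma cosh_pow_le_exp (x : ℝ) (N : ℕ) : cosh x ^ N ≤ exp (N * x ^ 2 / 2) := by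
  rw [mul_div_assoc, exp_nat_mul]
  exact pow_le_pow_left₀ (cosh_pos x).le (cosh_le_exp_half_sq x) N

lemma tendsto_integral_exp_neg_sq_div_two_mul_cosh_pow {β : ℝ} (hβ : β < 1) {t : ℕ → ℝ}
    (ht : Tendsto (fun N : ℕ => N * t N ^ 2) atTop (𝓝 β)) :
    Tendsto (fun N : ℕ => ∫ y : ℝ, exp (-(y ^ 2 / 2)) * cosh (t N * y) ^ N) atTop
      (𝓝 (√(2 * π) / √(1 - β))) := by
  obtain ⟨β', hββ', hβ'⟩ := exists_between hβ
  have hlimit : ∫ y : ℝ, exp (-((1 - β) / 2) * y ^ 2) = √(2 * π) / √(1 - β) := by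
    rw [integral_gaussian, ← sqrt_div' _ (by linarith : 0 ≤ 1 - β)]
    congr 1; field_simp
  rw [← hlimit]
  refine tendsto_integral_filter_of_dominated_convergence
    (fun y => exp (-((1 - β') / 2) * y ^ 2)) (.of_forall fun N => by fun_prop) ?_
    (integrable_exp_neg_mul_sq (by linarith)) (.of_forall fun y => ?_)
  · filter_upwards [ht.eventually_le_const hββ'] with N hN
    refine .of_forall fun y => ?_
    rw [norm_of_nonneg (by positivity)]
    calc exp (-(y ^ 2 / 2)) * cosh (t N * y) ^ N
        ≤ exp (-(y ^ 2 / 2)) * exp (N * (t N * y) ^ 2 / 2) := by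
          gcongr; exact cosh_pow_le_exp _ _
      _ ≤ exp (-(y ^ 2 / 2)) * exp (β' * y ^ 2 / 2) := by
          have : N * (t N * y) ^ 2 ≤ β' * y ^ 2 := by
            rw [mul_pow, ← mul_assoc]; exact mul_le_mul_of_nonneg_right hN (sq_nonneg y)
          gcongr
      _ = exp (-((1 - β') / 2) * y ^ 2) := by rw [← exp_add]; ring_nf
  · have hpoint := tendsto_cosh_pow_of_tendsto_mul_sq (x := fun N => t N * y)
      (by simpa [mul_pow, mul_assoc] using ht.mul_const (y ^ 2))
    convert hpoint.const_mul (exp (-(y ^ 2 / 2))) using 2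
    rw [← exp_add]; ring_nf

section Asymptotics

variable {p : ℕ → ℝ}

lemma tendsto_natCast_mul_atTop (hp : ∀ N, p N ∈ Set.Ioc (0 : ℝ) 1)
    (hp3 : Tendsto (fun N : ℕ => p N ^ 3 * (N : ℝ) ^ 2) atTop atTop) :
    Tendsto (fun N : ℕ => N * p N) atTop atTop := by
  refine tendsto_atTop_mono (fun N => ?_) (tendsto_sqrt_atTop.comp hp3)
  have hp0 := (hp N).1.le
  rw [Function.comp_apply, sqrt_le_left (by positivity), mul_pow]
  have : p N ^ 3 ≤ p N ^ 2 := pow_le_pow_of_le_one hp0 (hp N).2 (by norm_num)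
  nlinarith [sq_nonneg (N : ℝ)]

lemma tendsto_div_two_mul_natCast_mul (β : ℝ) (hp : ∀ N, p N ∈ Set.Ioc (0 : ℝ) 1)
    (hp3 : Tendsto (fun N : ℕ => p N ^ 3 * (N : ℝ) ^ 2) atTop atTop) :
    Tendsto (fun N : ℕ => β / (2 * N * p N)) atTop (𝓝 0) := by
  have := ((tendsto_natCast_mul_atTop hp hp3).inv_tendsto_atTop).const_mul (β / 2)
  simp only [mul_zero] at this
  refine this.congr fun N => ?_
  simp only [Pi.inv_apply]
  ring

lemma tendsto_sq_mul_cgfEven_sub (β : ℝ) (hp : ∀ N, p N ∈ Set.Ioc (0 : ℝ) 1)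
    (hp3 : Tendsto (fun N : ℕ => p N ^ 3 * (N : ℝ) ^ 2) atTop atTop) :
    Tendsto (fun N : ℕ => N ^ 2 * cgfEven (p N) (β / (2 * N * p N)) / 2
      - (1 - p N) * β ^ 2 / (8 * p N)) atTop (𝓝 0) := by
  have hc := (tendsto_div_two_mul_natCast_mul β hp hp3).abs
  rw [abs_zero] at hc
  refine squeeze_zero_norm' (a := fun N => 3 * β ^ 4 / 32 * (p N ^ 3 * N ^ 2)⁻¹) ?_ ?_
  · filter_upwards [eventually_ge_atTop 1, hc.eventually_le_const one_pos] with N hN hcN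
    have hN0 : (N : ℝ) ≠ 0 := Nat.cast_ne_zero.2 (by omega)
    have hp0 := (hp N).1
    set c := β / (2 * N * p N) with hc_def
    have hmain : (1 - p N) * β ^ 2 / (8 * p N) = N ^ 2 / 2 * ((p N - p N ^ 2) * c ^ 2) := by
      rw [hc_def]; field_simp; ring
    have herror : N ^ 2 / 2 * (3 * p N * c ^ 4) = 3 * β ^ 4 / 32 * (p N ^ 3 * N ^ 2)⁻¹ := by
      rw [hc_def]; field_simp; ring
    rw [hmain, ← herror, show N ^ 2 * cgfEven (p N) c / 2 - N ^ 2 / 2 * ((p N - p N ^ 2) * c ^ 2)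
      = N ^ 2 / 2 * (cgfEven (p N) c - (p N - p N ^ 2) * c ^ 2) by ring,
      Real.norm_eq_abs, abs_mul, abs_of_nonneg (by positivity : (0 : ℝ) ≤ N ^ 2 / 2)]
    exact mul_le_mul_of_nonneg_left (abs_cgfEven_sub_le hp0.le (hp N).2 hcN) (by positivity)
  · simpa using hp3.inv_tendsto_atTop.const_mul (3 * β ^ 4 / 32)

lemma tendsto_natCast_mul_cgfOdd (β : ℝ) (hp : ∀ N, p N ∈ Set.Ioc (0 : ℝ) 1)
    (hp3 : Tendsto (fun N : ℕ => p N ^ 3 * (N : ℝ) ^ 2) atTop atTop) :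
    Tendsto (fun N : ℕ => N * cgfOdd (p N) (β / (2 * N * p N))) atTop (𝓝 β) := by
  have hc := (tendsto_div_two_mul_natCast_mul β hp hp3).abs
  rw [abs_zero] at hc
  rw [← tendsto_sub_nhds_zero_iff]
  refine squeeze_zero_norm' (a := fun N => 3 * β ^ 2 * (N * p N)⁻¹) ?_ ?_
  · filter_upwards [eventually_ge_atTop 1, hc.eventually_le_const one_half_pos] with N hN hcN
    have hN0 : (N : ℝ) ≠ 0 := Nat.cast_ne_zero.2 (by omega)
    have hp0 := (hp N).1
    set c := β / (2 * N * p N) with hc_def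
    have hmain : β = N * (2 * p N * c) := by rw [hc_def]; field_simp
    have herror : N * (12 * p N * c ^ 2) = 3 * β ^ 2 * (N * p N)⁻¹ := by
      rw [hc_def]; field_simp; ring
    rw [← herror, show N * cgfOdd (p N) c - β = N * (cgfOdd (p N) c - 2 * p N * c) by
      linear_combination -hmain, norm_mul, Real.norm_natCast, Real.norm_eq_abs]
    exact mul_le_mul_of_nonneg_left (abs_cgfOdd_sub_le hp0.le (hp N).2 hcN) (by positivity)
  · simpa using (tendsto_natCast_mul_atTop hp hp3).inv_tendsto_atTop.const_mul (3 * β ^ 2)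

end Asymptotics

/-- **Theorem 3 (c).** For `0 < β < 1` and `p = p(N)` with `p³N² → ∞`, the expected
partition function satisfies `𝔼 Z_N(β) ∼ e^{(1-p)β²/(8p)} · 2^N / √(1-β)`. -/
theorem EZN_asymptotics (β : ℝ) (hβ : β ∈ Set.Ioo (0 : ℝ) 1)
    (p : ℕ → ℝ) (hp : ∀ N, p N ∈ Set.Ioc (0 : ℝ) 1)
    (hp3 : Tendsto (fun N : ℕ => (p N) ^ 3 * (N : ℝ) ^ 2) atTop atTop) :
    Tendsto (fun N : ℕ => EZNg N (p N) β (fun _ => 1) /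
        (Real.exp ((1 - p N) * β ^ 2 / (8 * p N)) * 2 ^ N / Real.sqrt (1 - β)))
      atTop (nhds 1) := by
  obtain ⟨hβ0, hβ1⟩ := hβ
  have hodd_nonneg (N : ℕ) : 0 ≤ cgfOdd (p N) (β / (2 * N * p N)) :=
    cgfOdd_nonneg (hp N).1.le (hp N).2 (div_nonneg hβ0.le (by have := (hp N).1; positivity))
  have hintegral := tendsto_integral_exp_neg_sq_div_two_mul_cosh_pow hβ1
    (t := fun N => √(cgfOdd (p N) (β / (2 * N * p N))))
    (by simpa only [sq_sqrt (hodd_nonneg _)] using tendsto_natCast_mul_cgfOdd β hp hp3)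
  have hlim := (tendsto_sq_mul_cgfEven_sub β hp hp3).rexp.mul
    (hintegral.const_mul (√(1 - β) / √(2 * π)))
  have hconst : √(1 - β) / √(2 * π) * (√(2 * π) / √(1 - β)) = 1 := by
    have : √(1 - β) ≠ 0 := (sqrt_pos.2 (by linarith)).ne'
    field_simp
  rw [exp_zero, one_mul, hconst] at hlim
  refine hlim.congr fun N => ?_
  rw [EZNg_one_eq N (hp N).1.le (hp N).2 hβ0.le, exp_sub]
  generalize (∫ y : ℝ, (_ : ℝ)) = I
  field_simp
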